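/- If in the chain rule setting additionally S₁|_X and S₂ are graph-convex and X is a smooth manifold around x̄, then S|_X = S₂∘S₁|_X is graph-convex and equality holds: D*_X S(x̄|ū) = D*_X S₁(x̄|w̄) ∘ D*S₂(w̄|ū) for every w̄ ∈ S₁|_X(x̄) ∩ S₂⁻¹(ū). -/

import Mathlib

open Filter Topology Set Metric
open scoped ENNReal NNReal

noncomputable section

/-- Euclidean space ℝⁿ. -/
abbrev Euc (n : ℕ) := EuclideanSpace ℝ (Fin n)

variable {E F : Type*}

/-- Set-valued metric (nearest-point) projection onto `C`. -/
def projSet [NormedAddCommGroup E] (C : Set E) (v : E) : Set E :=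
  {y | y ∈ C ∧ ‖v - y‖ = Metric.infDist v C}

/-- Bouligand (contingent) tangent cone to `C` at `x`. -/
def tanCone [NormedAddCommGroup E] [NormedSpace ℝ E] (C : Set E) (x : E) : Set E :=
  {w | ∃ t : ℕ → ℝ, ∃ w' : ℕ → E, (∀ k, 0 < t k) ∧ Tendsto t atTop (𝓝 0) ∧
      Tendsto w' atTop (𝓝 w) ∧ ∀ k, x + t k • w' k ∈ C}

section Normals
variable [NormedAddCommGroup E] [InnerProductSpace ℝ E]
  [NormedAddCommGroup F] [InnerProductSpace ℝ F]

/-- Fréchet (regular) normal cone to `C` at `x`. -/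
def fNormal (C : Set E) (x : E) : Set E :=
  {v | x ∈ C ∧ ∀ ε > 0, ∃ δ > 0, ∀ y ∈ C, ‖y - x‖ < δ → (inner ℝ v (y - x) : ℝ) ≤ ε * ‖y - x‖}

/-- Limiting (Mordukhovich) normal cone to `C` at `x`. -/
def lNormal (C : Set E) (x : E) : Set E :=
  {v | x ∈ C ∧ ∃ xk vk : ℕ → E, (∀ k, vk k ∈ fNormal C (xk k)) ∧
      Tendsto xk atTop (𝓝 x) ∧ Tendsto vk atTop (𝓝 v)}

/-- Fréchet normal cone to a subset of a product space (componentwise inner product). -/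
def fNormal2 (D : Set (E × F)) (z : E × F) : Set (E × F) :=
  {v | z ∈ D ∧ ∀ ε > 0, ∃ δ > 0, ∀ z' ∈ D, ‖z' - z‖ < δ →
      (inner ℝ v.1 (z'.1 - z.1) : ℝ) + (inner ℝ v.2 (z'.2 - z.2) : ℝ) ≤ ε * ‖z' - z‖}

/-- Limiting normal cone to a subset of a product space. -/
def lNormal2 (D : Set (E × F)) (z : E × F) : Set (E × F) :=
  {v | z ∈ D ∧ ∃ zk vk : ℕ → E × F, (∀ k, vk k ∈ fNormal2 D (zk k)) ∧
      Tendsto zk atTop (𝓝 z) ∧ Tendsto vk atTop (𝓝 v)}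

/-- Graph of a set-valued mapping. -/
def gph (S : E → Set F) : Set (E × F) := {z | z.2 ∈ S z.1}

/-- Restriction of a set-valued mapping to a set `X`. -/
def restr (S : E → Set F) (X : Set E) : E → Set F := fun x => {u | u ∈ S x ∧ x ∈ X}

/-- Fréchet coderivative of `S` at `x` for `u`. -/
def fCoderiv (S : E → Set F) (x : E) (u : F) (u' : F) : Set E :=
  {x' | (x', -u') ∈ fNormal2 (gph S) (x, u)}

/-- Limiting coderivative of `S` at `x` for `u`. -/
def coderiv (S : E → Set F) (x : E) (u : F) (u' : F) : Set E :=
  {x' | (x', -u') ∈ lNormal2 (gph S) (x, u)}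

/-- Projection of the limiting normal cone of `gph (restr S X)` at `z`
onto `T_X(z.1) × F` (projection acting on the first component only). -/
def projNormal (S : E → Set F) (X : Set E) (z : E × F) : Set (E × F) :=
  {q | ∃ v : E, (v, q.2) ∈ lNormal2 (gph (restr S X)) z ∧ q.1 ∈ projSet (tanCone X z.1) v}

/-- Projectional coderivative of `S` relative to `X` at `x` for `u`:
the outer limit of the projected normal cones along `gph (restr S X)`. -/
def projCoderiv (S : E → Set F) (X : Set E) (x : E) (u : F) (u' : F) : Set E :=
  {t | ∃ zk qk : ℕ → E × F,
      (∀ k, zk k ∈ gph (restr S X)) ∧ (∀ k, qk k ∈ projNormal S X (zk k)) ∧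
      Tendsto zk atTop (𝓝 (x, u)) ∧ Tendsto qk atTop (𝓝 (t, -u'))}

/-- `C` is locally closed at `z`. -/
def LocallyClosedAt (C : Set E) (z : E) : Prop :=
  ∃ ε > 0, IsClosed (C ∩ Metric.closedBall z ε)

/-- `S` has the Lipschitz-like (Aubin) property relative to `X` at `xb` for `ub`
with constant `κ`. -/
def LipschitzLikeRel (S : E → Set F) (X : Set E) (xb : E) (ub : F) (κ : ℝ) : Prop :=
  LocallyClosedAt (gph S) (xb, ub) ∧
  ∃ V ∈ 𝓝 xb, ∃ W ∈ 𝓝 ub, ∀ x ∈ X ∩ V, ∀ x' ∈ X ∩ V, ∀ u ∈ S x' ∩ W,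
    ∃ u'' ∈ S x, ‖u - u''‖ ≤ κ * ‖x' - x‖

end Normals

/-- `X ⊆ ℝⁿ` is a smooth manifold around `x₀`, witnessed by the chart data
`(O, Φ, Φ')`: `O` open containing `x₀`, `X ∩ O = Φ⁻¹(0)`, `Φ` is `C¹` on `O`
with derivative `Φ'`, and `Φ'(x₀)` is surjective (full rank). -/
def IsSmoothMfdChart {n c : ℕ} (X : Set (Euc n)) (x₀ : Euc n) (O : Set (Euc n))
    (Φ : Euc n → Euc c) (Φ' : Euc n → (Euc n →L[ℝ] Euc c)) : Prop :=
  IsOpen O ∧ x₀ ∈ O ∧ X ∩ O = {x | x ∈ O ∧ Φ x = 0} ∧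
  (∀ x ∈ O, HasFDerivAt Φ (Φ' x) x) ∧ ContinuousOn Φ' O ∧
  Function.Surjective (Φ' x₀)

/-- `X ⊆ ℝⁿ` is a smooth manifold around `x₀`. -/
def SmoothManifoldAround {n : ℕ} (X : Set (Euc n)) (x₀ : Euc n) : Prop :=
  ∃ (c : ℕ) (O : Set (Euc n)) (Φ : Euc n → Euc c) (Φ' : Euc n → (Euc n →L[ℝ] Euc c)),
    IsSmoothMfdChart X x₀ O Φ Φ'

/-- Composition of set-valued mappings: `(S₂ ∘ S₁)(x) = ⋃_{w ∈ S₁(x)} S₂(w)`. -/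
def scomp {E P F : Type*} (S₂ : P → Set F) (S₁ : E → Set P) : E → Set F :=
  fun x => {u | ∃ w ∈ S₁ x, u ∈ S₂ w}

/-- Outer semicontinuity of a set-valued mapping relative to a set `X`. -/
def OscRel {E P : Type*} [TopologicalSpace E] [TopologicalSpace P]
    (S : E → Set P) (X : Set E) : Prop :=
  ∀ x ∈ X, ∀ (xk : ℕ → E) (wk : ℕ → P) (w : P),
    (∀ k, xk k ∈ X) → (∀ k, wk k ∈ S (xk k)) →
    Filter.Tendsto xk Filter.atTop (nhds x) → Filter.Tendsto wk Filter.atTop (nhds w) →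
    w ∈ S x


/-!
With convex graphs, Fréchet and limiting normals both reduce to the normal cone of convex
analysis. Near `xb` the tangent cone to the manifold `X` at `x` is the subspace `ker Φ'(x)`, and
differences of points of the graph have first components in it; so the projection onto it in the
definition of `projNormal` changes no pairing with such differences, and the projectional
coderivative is `{t ∈ T_X(xb) | (t, -u') ∈ N(xb, ub)}`. The chain rule for convex normal cones of
`scomp S₂ (restr S₁ X)` comes from separating `0` from the convex set of
`(w₁ - w₂, ⟪t, x' - xb⟫ - ⟪us, u' - ub⟫ - s)` in `P × ℝ`, with `(x', w₁)` and `(w₂, u')` in the two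
graphs and `s > 0`; the qualification condition rules out a vanishing multiplier of the `ℝ`
component.
-/

section ConvexNormal

variable {E F : Type*} [NormedAddCommGroup E] [InnerProductSpace ℝ E]
  [NormedAddCommGroup F] [InnerProductSpace ℝ F]

def convexNormal2 (D : Set (E × F)) (z : E × F) : Set (E × F) :=
  {v | z ∈ D ∧ ∀ z' ∈ D, (inner ℝ v.1 (z'.1 - z.1) : ℝ) + (inner ℝ v.2 (z'.2 - z.2) : ℝ) ≤ 0}

theorem convexNormal2_subset_fNormal2 (D : Set (E × F)) (z : E × F) :
    convexNormal2 D z ⊆ fNormal2 D z := fun _ ⟨hz, hv⟩ =>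
  ⟨hz, fun ε hε => ⟨1, one_pos, fun z' hz' _ => (hv z' hz').trans (by positivity)⟩⟩

theorem fNormal2_subset_convexNormal2 {D : Set (E × F)} (hD : Convex ℝ D) (z : E × F) :
    fNormal2 D z ⊆ convexNormal2 D z := by
  rintro v ⟨hz, hv⟩
  refine ⟨hz, fun z' hz' => ?_⟩
  set d := z' - z
  set P := (inner ℝ v.1 d.1 : ℝ) + (inner ℝ v.2 d.2 : ℝ)
  have hsmall : ∀ ε > 0, P ≤ ε * ‖d‖ := by
    intro ε hε
    obtain ⟨δ, hδ, hv⟩ := hv ε hε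
    have hnear : ∀ᶠ τ in 𝓝 (0 : ℝ), ‖τ • d‖ < δ := by
      have : Tendsto (fun τ : ℝ => ‖τ • d‖) (𝓝 0) (𝓝 0) := by
        simpa using ((tendsto_id (x := 𝓝 (0 : ℝ))).smul_const d).norm
      exact this.eventually (gt_mem_nhds hδ)
    have hτ : ∀ᶠ τ in 𝓝[>] (0 : ℝ), 0 < τ ∧ τ ≤ 1 ∧ ‖τ • d‖ < δ := by
      filter_upwards [Ioo_mem_nhdsGT one_pos, nhdsWithin_le_nhds hnear] with τ hτ hτδ
      exact ⟨hτ.1, hτ.2.le, hτδ⟩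
    obtain ⟨τ, hτ0, hτ1, hτδ⟩ := hτ.exists
    have h := hv _ (hD.add_smul_sub_mem hz hz' ⟨hτ0.le, hτ1⟩) (by simpa using hτδ)
    simp only [Prod.fst_add, Prod.snd_add, Prod.smul_fst, Prod.smul_snd, add_sub_cancel_left,
      real_inner_smul_right, norm_smul, Real.norm_of_nonneg hτ0.le] at h
    nlinarith
  have hlim : Tendsto (fun ε : ℝ => ε * ‖d‖) (𝓝[>] 0) (𝓝 0) := by
    simpa using ((tendsto_id (x := 𝓝 (0 : ℝ))).mul_const ‖d‖).mono_left nhdsWithin_le_nhds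
  exact ge_of_tendsto hlim (eventually_nhdsWithin_of_forall hsmall)

theorem lNormal2_eq_convexNormal2 {D : Set (E × F)} (hD : Convex ℝ D) (z : E × F) :
    lNormal2 D z = convexNormal2 D z := by
  refine subset_antisymm ?_ fun v hv => ⟨hv.1, fun _ => z, fun _ => v,
    fun _ => convexNormal2_subset_fNormal2 D z hv, tendsto_const_nhds, tendsto_const_nhds⟩
  rintro v ⟨hz, zk, vk, hvk, hzk, hvk'⟩
  refine ⟨hz, fun z' hz' => ?_⟩
  have hlim :=
    ((hvk'.fst_nhds.inner (𝕜 := ℝ) ((tendsto_const_nhds (x := z'.1)).sub hzk.fst_nhds)).add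
    (hvk'.snd_nhds.inner (𝕜 := ℝ) ((tendsto_const_nhds (x := z'.2)).sub hzk.snd_nhds)))
  exact le_of_tendsto' hlim fun k => (fNormal2_subset_convexNormal2 hD _ (hvk k)).2 z' hz'

end ConvexNormal

section TangentCone

variable {E : Type*} [NormedAddCommGroup E] [NormedSpace ℝ E] {C : Set E} {x : E}

theorem mem_tanCone_of_eventually {t : ℕ → ℝ} {w' : ℕ → E} {w : E}
    (ht : Tendsto t atTop (𝓝 0)) (hw' : Tendsto w' atTop (𝓝 w))
    (hmem : ∀ᶠ k in atTop, 0 < t k ∧ x + t k • w' k ∈ C) : w ∈ tanCone C x := by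
  obtain ⟨N, hN⟩ := eventually_atTop.1 hmem
  exact ⟨fun k => t (k + N), fun k => w' (k + N), fun k => (hN _ le_add_self).1,
    ht.comp (tendsto_add_atTop_nat N), hw'.comp (tendsto_add_atTop_nat N),
    fun k => (hN _ le_add_self).2⟩

theorem zero_mem_tanCone (hx : x ∈ C) : (0 : E) ∈ tanCone C x :=
  ⟨fun k => 1 / (k + 1), fun _ => 0, fun k => by positivity,
    tendsto_one_div_add_atTop_nhds_zero_nat, tendsto_const_nhds, fun k => by simpa using hx⟩

theorem sub_mem_tanCone_of_segment_subset {y : E} (h : segment ℝ x y ⊆ C) :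
    y - x ∈ tanCone C x := by
  refine ⟨fun k => 1 / (k + 1), fun _ => y - x, fun k => by positivity,
    tendsto_one_div_add_atTop_nhds_zero_nat, tendsto_const_nhds, fun k => h ?_⟩
  refine (convex_segment x y).add_smul_sub_mem (left_mem_segment ℝ x y)
    (right_mem_segment ℝ x y) ⟨by positivity, ?_⟩
  rw [div_le_one (by positivity)]
  linarith [k.cast_nonneg (α := ℝ)]

theorem tanCone_subset_tangentConeAt : tanCone C x ⊆ tangentConeAt ℝ C x := by
  rintro w ⟨t, w', ht, ht0, hw', hmem⟩
  refine mem_tangentConeAt_of_seq atTop (fun k => (t k)⁻¹) (fun k => t k • w' k) ?_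
    (Eventually.of_forall hmem) ?_
  · simpa using ht0.smul hw'
  · simpa only [smul_smul, inv_mul_cancel₀ (ht _).ne', one_smul] using hw'

theorem tanCone_subset_ker {F : Type*} [NormedAddCommGroup F] [NormedSpace ℝ F]
    {Φ : E → F} {L : E →L[ℝ] F} (hΦ : HasFDerivAt Φ L x)
    (hC : ∀ᶠ y in 𝓝 x, y ∈ C → Φ y = Φ x) : tanCone C x ⊆ L.ker := by
  intro w hw
  have hw' : w ∈ tangentConeAt ℝ (C ∩ {y | y ∈ C → Φ y = Φ x}) x := by
    rw [tangentConeAt_inter_nhds hC]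
    exact tanCone_subset_tangentConeAt hw
  have himage : Φ '' (C ∩ {y | y ∈ C → Φ y = Φ x}) ⊆ {Φ x} := by
    rintro _ ⟨y, hy, rfl⟩
    exact hy.2 hy.1
  have hisolated : ¬AccPt (Φ x) (𝓟 {Φ x}) := fun h => Set.Infinite.of_accPt h (finite_singleton _)
  simpa using tangentConeAt_subset_zero hisolated
    (tangentConeAt_mono himage (hΦ.hasFDerivWithinAt.mapsTo_tangent_cone hw'))

theorem HasDerivAt.mem_tanCone {γ : ℝ → E} {v : E} (hγ : HasDerivAt γ v 0) (hγ0 : γ 0 = x)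
    (hC : ∀ᶠ s in 𝓝 0, γ s ∈ C) : v ∈ tanCone C x := by
  have ht : Tendsto (fun k : ℕ => 1 / ((k : ℝ) + 1)) atTop (𝓝[>] 0) :=
    tendsto_nhdsWithin_iff.2 ⟨tendsto_one_div_add_atTop_nhds_zero_nat,
      Eventually.of_forall fun k => by simp only [mem_Ioi]; positivity⟩
  refine mem_tanCone_of_eventually (ht.mono_right nhdsWithin_le_nhds)
    ((hasDerivAt_iff_tendsto_slope.1 hγ).comp (ht.mono_right (nhdsWithin_mono _ ?_)))
    ?_
  · exact fun s hs => ne_of_gt hs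
  filter_upwards [(ht.mono_right nhdsWithin_le_nhds).eventually hC] with k hk
  have hpos : (0 : ℝ) < 1 / ((k : ℝ) + 1) := by positivity
  refine ⟨hpos, ?_⟩
  rwa [Function.comp_apply, slope_def_module, sub_zero, hγ0, smul_inv_smul₀ hpos.ne',
    add_sub_cancel]

end TangentCone

section LevelSet

variable {E F : Type*} [NormedAddCommGroup E] [NormedSpace ℝ E] [CompleteSpace E]
  [NormedAddCommGroup F] [NormedSpace ℝ F] [FiniteDimensional ℝ F]
  {C : Set E} {x : E} {Φ : E → F} {L : E →L[ℝ] F}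

theorem ker_subset_tanCone (hΦ : HasStrictFDerivAt Φ L x) (hL : Function.Surjective L)
    (hC : ∀ᶠ y in 𝓝 x, Φ y = Φ x → y ∈ C) : (L.ker : Set E) ⊆ tanCone C x := by
  intro h hh
  have hrange : L.range = ⊤ := LinearMap.range_eq_top.2 hL
  set ψ := hΦ.implicitFunction Φ L hrange (Φ x)
  let hk : L.ker := ⟨h, hh⟩
  have hline : Tendsto (fun s : ℝ => s • hk) (𝓝 0) (𝓝 0) := by
    simpa using (tendsto_id (x := 𝓝 (0 : ℝ))).smul_const hk
  have hγ : HasDerivAt (fun s : ℝ => ψ (s • hk)) h 0 :=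
    (hΦ.to_implicitFunction hrange).hasFDerivAt.comp_hasDerivAt_of_eq
      (f := fun s : ℝ => s • hk) (f' := hk)
      0 (by simpa using (hasDerivAt_id (0 : ℝ)).smul_const hk) (by simp)
  have hγ0 : ψ ((0 : ℝ) • hk) = x := by simp [ψ]
  have hlevel : ∀ᶠ s in 𝓝 (0 : ℝ), Φ (ψ (s • hk)) = Φ x :=
    (tendsto_const_nhds.prodMk_nhds hline).eventually (hΦ.map_implicitFunction_eq hrange)
  have hnear : Tendsto (fun s : ℝ => ψ (s • hk)) (𝓝 0) (𝓝 x) := hγ0 ▸ hγ.continuousAt.tendsto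
  refine hγ.mem_tanCone hγ0 ?_
  filter_upwards [hlevel, hnear.eventually hC] with s hs hsC using hsC hs

theorem tanCone_eq_ker (hΦ : HasStrictFDerivAt Φ L x) (hL : Function.Surjective L)
    (hC : ∀ᶠ y in 𝓝 x, y ∈ C ↔ Φ y = Φ x) : tanCone C x = L.ker :=
  subset_antisymm (tanCone_subset_ker hΦ.hasFDerivAt (hC.mono fun _ hy => hy.1))
    (ker_subset_tanCone hΦ hL (hC.mono fun _ hy => hy.2))

end LevelSet

theorem ContinuousAt.eventually_surjective {X E F : Type*} [TopologicalSpace X]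
    [NormedAddCommGroup E] [NormedSpace ℝ E] [NormedAddCommGroup F] [NormedSpace ℝ F]
    [FiniteDimensional ℝ F] {L : X → E →L[ℝ] F} {x₀ : X} (hL : ContinuousAt L x₀)
    (hs : Function.Surjective (L x₀)) : ∀ᶠ x in 𝓝 x₀, Function.Surjective (L x) := by
  have : CompleteSpace F := FiniteDimensional.complete ℝ F
  obtain ⟨g, hg⟩ := LinearMap.exists_rightInverse_of_surjective (L x₀ : E →ₗ[ℝ] F)
    (LinearMap.range_eq_top.2 hs)
  set B : F →L[ℝ] E := LinearMap.toContinuousLinearMap g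
  have hcomp : ContinuousAt (fun x => (L x).comp B) x₀ :=
    (ContinuousLinearMap.isBoundedLinearMap_comp_right B).continuous.continuousAt.comp hL
  have hone : (L x₀).comp B = 1 := ContinuousLinearMap.ext fun y => LinearMap.ext_iff.1 hg y
  filter_upwards [hcomp.eventually (Units.isOpen.mem_nhds (by simp [hone]))] with x hx
  refine Function.Surjective.of_comp (g := B) fun y =>
    ⟨((hx.unit⁻¹ : (F →L[ℝ] F)ˣ) : F →L[ℝ] F) y, ?_⟩
  exact DFunLike.congr_fun hx.mul_val_inv y

section Chart

variable {n c : ℕ} {X O : Set (Euc n)} {x₀ : Euc n} {Φ : Euc n → Euc c}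
  {Φ' : Euc n → Euc n →L[ℝ] Euc c}

theorem IsSmoothMfdChart.continuousAt (h : IsSmoothMfdChart X x₀ O Φ Φ') :
    ContinuousAt Φ' x₀ :=
  h.2.2.2.2.1.continuousAt (h.1.mem_nhds h.2.1)

theorem IsSmoothMfdChart.eventually_tanCone_eq_ker (h : IsSmoothMfdChart X x₀ O Φ Φ') :
    ∀ᶠ x in 𝓝 x₀, x ∈ X → tanCone X x = (Φ' x).ker := by
  obtain ⟨hO, hx₀, hXO, hder, hcont, -⟩ := id h
  filter_upwards [hO.mem_nhds hx₀, h.continuousAt.eventually_surjective h.2.2.2.2.2]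
    with x hxO hsurj hxX
  have hzero : ∀ y ∈ O, y ∈ X ↔ Φ y = 0 := fun y hy => by
    simpa [hy] using Set.ext_iff.1 hXO y
  have hstrict : HasStrictFDerivAt Φ (Φ' x) x :=
    hasStrictFDerivAt_of_hasFDerivAt_of_continuousAt
      (eventually_of_mem (hO.mem_nhds hxO) hder) (hcont.continuousAt (hO.mem_nhds hxO))
  refine tanCone_eq_ker hstrict hsurj (eventually_of_mem (hO.mem_nhds hxO) fun y hy => ?_)
  rw [hzero y hy, (hzero x hxO).1 hxX]

end Chart

theorem self_mem_projSet {E : Type*} [NormedAddCommGroup E] {K : Set E} {t : E} (ht : t ∈ K) :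
    t ∈ projSet K t :=
  ⟨ht, by rw [sub_self, norm_zero, Metric.infDist_zero_of_mem ht]⟩

section ProjCoderiv

variable {E F H : Type*} [NormedAddCommGroup E] [InnerProductSpace ℝ E]
  [NormedAddCommGroup F] [InnerProductSpace ℝ F] [NormedAddCommGroup H] [NormedSpace ℝ H]

theorem inner_sub_eq_zero_of_mem_projSet {K : Submodule ℝ E} {v y w : E}
    (hy : y ∈ projSet (K : Set E) v) (hw : w ∈ K) : inner ℝ (v - y) w = 0 := by
  refine (K.norm_eq_iInf_iff_real_inner_eq_zero hy.1).1 ?_ w hw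
  simp only [hy.2, Metric.infDist_eq_iInf, dist_eq_norm]

theorem mem_convexNormal2_of_mem_projNormal {S : E → Set F} {X : Set E} {K : Submodule ℝ E}
    {z q : E × F} (hG : Convex ℝ (gph (restr S X))) (hz : z ∈ gph (restr S X))
    (hT : tanCone X z.1 = K) (hq : q ∈ projNormal S X z) :
    q ∈ convexNormal2 (gph (restr S X)) z ∧ q.1 ∈ K := by
  obtain ⟨v, hv, hproj⟩ := hq
  rw [lNormal2_eq_convexNormal2 hG] at hv
  rw [hT] at hproj
  refine ⟨⟨hz, fun z' hz' => ?_⟩, hproj.1⟩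
  have hdir : z'.1 - z.1 ∈ K := by
    rw [← SetLike.mem_coe, ← hT]
    refine sub_mem_tanCone_of_segment_subset ?_
    rintro _ ⟨a, b, ha, hb, hab, rfl⟩
    exact (hG hz hz' ha hb hab).2
  have hperp := inner_sub_eq_zero_of_mem_projSet hproj hdir
  rw [inner_sub_left, sub_eq_zero] at hperp
  exact hperp ▸ hv.2 z' hz'

theorem projCoderiv_eq_of_convex {S : E → Set F} {X : Set E} {L : E → E →L[ℝ] H}
    {xb : E} {ub : F} (hG : Convex ℝ (gph (restr S X))) (hz : (xb, ub) ∈ gph (restr S X))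
    (hL : ContinuousAt L xb) (hT : ∀ᶠ x in 𝓝 xb, x ∈ X → tanCone X x = (L x).ker) (u' : F) :
    projCoderiv S X xb ub u' =
      {t | t ∈ tanCone X xb ∧ (t, -u') ∈ convexNormal2 (gph (restr S X)) (xb, ub)} := by
  ext t
  constructor
  · rintro ⟨zk, qk, hzk, hqk, hzkl, hqkl⟩
    have hnormal : ∀ᶠ k in atTop,
        qk k ∈ convexNormal2 (gph (restr S X)) (zk k) ∧ (qk k).1 ∈ (L (zk k).1).ker := by
      filter_upwards [hzkl.fst_nhds.eventually hT] with k hk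
      exact mem_convexNormal2_of_mem_projNormal hG (hzk k) (hk (hzk k).2) (hqk k)
    refine ⟨?_, ?_⟩
    · have hlim : Tendsto (fun k => L (zk k).1 (qk k).1) atTop (𝓝 (L xb t)) :=
        (isBoundedBilinearMap_apply.continuous.tendsto _).comp
          ((hL.tendsto.comp hzkl.fst_nhds).prodMk_nhds hqkl.fst_nhds)
      rw [hT.self_of_nhds hz.2]
      exact tendsto_nhds_unique hlim
        (tendsto_const_nhds.congr' (hnormal.mono fun k hk => hk.2.symm))
    · obtain ⟨N, hN⟩ := eventually_atTop.1 hnormal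
      rw [← lNormal2_eq_convexNormal2 hG]
      exact ⟨hz, fun k => zk (k + N), fun k => qk (k + N),
        fun k => convexNormal2_subset_fNormal2 _ _ (hN _ le_add_self).1,
        hzkl.comp (tendsto_add_atTop_nat N), hqkl.comp (tendsto_add_atTop_nat N)⟩
  · rintro ⟨htT, htN⟩
    refine ⟨fun _ => (xb, ub), fun _ => (t, -u'), fun _ => hz, fun _ => ⟨t, ?_,
      self_mem_projSet htT⟩, tendsto_const_nhds, tendsto_const_nhds⟩
    rwa [lNormal2_eq_convexNormal2 hG]

end ProjCoderiv

theorem restr_scomp {E P F : Type*} (S₂ : P → Set F) (S₁ : E → Set P) (X : Set E) :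
    restr (scomp S₂ S₁) X = scomp S₂ (restr S₁ X) := by
  ext x u
  exact ⟨fun ⟨⟨w, hw, hu⟩, hx⟩ => ⟨w, ⟨hw, hx⟩, hu⟩, fun ⟨w, ⟨hw, hx⟩, hu⟩ => ⟨⟨w, hw, hu⟩, hx⟩⟩

theorem Convex.gph_scomp {E P F : Type*} [AddCommGroup E] [Module ℝ E] [AddCommGroup P]
    [Module ℝ P] [AddCommGroup F] [Module ℝ F] {T₁ : E → Set P} {S₂ : P → Set F}
    (h₁ : Convex ℝ (gph T₁)) (h₂ : Convex ℝ (gph S₂)) : Convex ℝ (gph (scomp S₂ T₁)) := by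
  rintro ⟨x, u⟩ ⟨w, hw, hu⟩ ⟨x', u'⟩ ⟨w', hw', hu'⟩ a b ha hb hab
  exact ⟨a • w + b • w', h₁ (x := (x, w)) hw (y := (x', w')) hw' ha hb hab,
    h₂ (x := (w, u)) hu (y := (w', u')) hu' ha hb hab⟩

theorem Convex.exists_ne_zero_nonneg_of_zero_notMem {V : Type*} [NormedAddCommGroup V]
    [NormedSpace ℝ V] [FiniteDimensional ℝ V] {C : Set V} (hC : Convex ℝ C) (hne : C.Nonempty)
    (h0 : (0 : V) ∉ C) : ∃ f : V →L[ℝ] ℝ, f ≠ 0 ∧ ∀ c ∈ C, 0 ≤ f c := by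
  by_cases hint : (interior C).Nonempty
  · obtain ⟨f, hf, hfC⟩ := geometric_hahn_banach_of_nonempty_interior_point hC
      (fun h => h0 (interior_subset h)) hint
    exact ⟨-f, neg_ne_zero.2 hf, fun c hc => by simpa using hfC c hc⟩
  -- otherwise `C` lies in a proper affine subspace, on which a nonzero functional is constant
  obtain ⟨c₀, hc₀⟩ := hne
  have hspan : vectorSpan ℝ C < ⊤ := by
    rwa [lt_top_iff_ne_top, Ne,
      ← AffineSubspace.affineSpan_eq_top_iff_vectorSpan_eq_top_of_nonempty ℝ V V ⟨c₀, hc₀⟩,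
      ← hC.interior_nonempty_iff_affineSpan_eq_top]
  obtain ⟨f, hf, hker⟩ := (vectorSpan ℝ C).exists_le_ker_of_lt_top hspan
  have hconst : ∀ c ∈ C, f c = f c₀ := fun c hc => by
    have := hker (vsub_mem_vectorSpan ℝ hc hc₀)
    rwa [LinearMap.mem_ker, vsub_eq_sub, map_sub, sub_eq_zero] at this
  set g := LinearMap.toContinuousLinearMap f
  have hg : g ≠ 0 := fun h => hf (LinearMap.ext fun v => by simpa [g] using DFunLike.congr_fun h v)
  rcases le_total 0 (f c₀) with h | h
  · exact ⟨g, hg, fun c hc => by simpa [g, hconst c hc] using h⟩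
  · exact ⟨-g, neg_ne_zero.2 hg, fun c hc => by simpa [g, hconst c hc] using h⟩

theorem ContinuousLinearMap.exists_inner_add_mul {P : Type*} [NormedAddCommGroup P]
    [InnerProductSpace ℝ P] [CompleteSpace P] (f : P × ℝ →L[ℝ] ℝ) :
    ∃ (ξ : P) (α : ℝ), ∀ w r, f (w, r) = inner ℝ ξ w + α * r := by
  refine ⟨(InnerProductSpace.toDual ℝ P).symm (f.comp (.inl ℝ P ℝ)), f (0, 1), fun w r => ?_⟩
  have hsplit : ((w, r) : P × ℝ) = (w, 0) + r • ((0 : P), (1 : ℝ)) := by simp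
  rw [InnerProductSpace.toDual_symm_apply, hsplit, map_add, map_smul]
  simp [mul_comm]

theorem real_inner_combo_sub {V : Type*} [NormedAddCommGroup V] [InnerProductSpace ℝ V]
    {a b : ℝ} (hab : a + b = 1) (t x₁ x₂ x : V) :
    inner ℝ t (a • x₁ + b • x₂ - x) = a * inner ℝ t (x₁ - x) + b * inner ℝ t (x₂ - x) := by
  conv_lhs => rw [← Convex.combo_self hab x]
  rw [← real_inner_smul_right, ← real_inner_smul_right, ← inner_add_right, smul_sub, smul_sub]
  congr 1
  abel

section Composition

variable {E P F : Type*} [NormedAddCommGroup E] [InnerProductSpace ℝ E]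
  [NormedAddCommGroup P] [InnerProductSpace ℝ P] [FiniteDimensional ℝ P]
  [NormedAddCommGroup F] [InnerProductSpace ℝ F]
  {T₁ : E → Set P} {S₂ : P → Set F} {x : E} {w : P} {u : F} {t : E} {us : F}

theorem exists_multipliers_of_mem_convexNormal2_gph_scomp (h₁ : Convex ℝ (gph T₁))
    (h₂ : Convex ℝ (gph S₂)) (hxw : (x, w) ∈ gph T₁) (hwu : (w, u) ∈ gph S₂)
    (ht : (t, -us) ∈ convexNormal2 (gph (scomp S₂ T₁)) (x, u)) :
    ∃ (ξ : P) (α : ℝ), α ≤ 0 ∧ (ξ ≠ 0 ∨ α ≠ 0) ∧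
      ∀ x' w₁ w₂ u', (x', w₁) ∈ gph T₁ → (w₂, u') ∈ gph S₂ →
        0 ≤ inner ℝ ξ (w₁ - w₂) + α * (inner ℝ t (x' - x) - inner ℝ us (u' - u)) := by
  set D : Set (P × ℝ) := {q | ∃ x' w₁ w₂ u' s, (x', w₁) ∈ gph T₁ ∧ (w₂, u') ∈ gph S₂ ∧ 0 < s ∧
    q = (w₁ - w₂, inner ℝ t (x' - x) - inner ℝ us (u' - u) - s)}
  have hD : Convex ℝ D := by
    rintro _ ⟨x₁, v₁, v₁', u₁, s₁, hT₁, hS₁, hs₁, rfl⟩ _ ⟨x₂, v₂, v₂', u₂, s₂, hT₂, hS₂, hs₂, rfl⟩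
      a b ha hb hab
    refine ⟨a • x₁ + b • x₂, a • v₁ + b • v₂, a • v₁' + b • v₂', a • u₁ + b • u₂, a * s₁ + b * s₂,
      h₁ hT₁ hT₂ ha hb hab, h₂ hS₁ hS₂ ha hb hab, ?_, ?_⟩
    · nlinarith [mul_le_mul_of_nonneg_left (min_le_left s₁ s₂) ha,
        mul_le_mul_of_nonneg_left (min_le_right s₁ s₂) hb, lt_min hs₁ hs₂]
    · ext
      · simp only [Prod.fst_add, Prod.smul_fst, smul_sub]
        abel
      · simp only [Prod.snd_add, Prod.smul_snd, smul_eq_mul, real_inner_combo_sub hab]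
        ring
  have hD0 : (0 : P × ℝ) ∉ D := by
    rintro ⟨x', w₁, w₂, u', s, hT, hS, hs, h0⟩
    obtain ⟨hw, hr⟩ := Prod.ext_iff.1 h0
    rw [Prod.fst_zero, eq_comm, sub_eq_zero] at hw
    subst hw
    have := ht.2 (x', u') ⟨w₁, hT, hS⟩
    simp only [inner_neg_left, Prod.snd_zero] at this hr
    linarith
  obtain ⟨f, hf, hfD⟩ :=
    hD.exists_ne_zero_nonneg_of_zero_notMem ⟨_, x, w, w, u, 1, hxw, hwu, one_pos, rfl⟩ hD0
  obtain ⟨ξ, α, hfξα⟩ := f.exists_inner_add_mul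
  have hD' : ∀ x' w₁ w₂ u' s, (x', w₁) ∈ gph T₁ → (w₂, u') ∈ gph S₂ → 0 < s →
      0 ≤ inner ℝ ξ (w₁ - w₂) + α * (inner ℝ t (x' - x) - inner ℝ us (u' - u) - s) :=
    fun x' w₁ w₂ u' s hT hS hs => hfξα _ _ ▸ hfD _ ⟨x', w₁, w₂, u', s, hT, hS, hs, rfl⟩
  refine ⟨ξ, α, ?_, ?_, fun x' w₁ w₂ u' hT hS => ?_⟩
  · simpa using hD' x w w u 1 hxw hwu one_pos
  · by_contra! h
    exact hf (ContinuousLinearMap.ext fun ⟨w', r⟩ => by simp [hfξα, h.1, h.2])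
  · have hcont : Continuous fun s : ℝ =>
        inner ℝ ξ (w₁ - w₂) + α * (inner ℝ t (x' - x) - inner ℝ us (u' - u) - s) := by
      fun_prop
    simpa using ge_of_tendsto ((hcont.tendsto 0).mono_left (nhdsWithin_le_nhds (s := Ioi 0)))
      (eventually_nhdsWithin_of_forall fun s hs => hD' _ _ _ _ s hT hS hs)

theorem mem_convexNormal2_gph_scomp_iff (h₁ : Convex ℝ (gph T₁)) (h₂ : Convex ℝ (gph S₂))
    (hxw : (x, w) ∈ gph T₁) (hwu : (w, u) ∈ gph S₂)
    (hq : ∀ ξ : P, (ξ, (0 : F)) ∈ convexNormal2 (gph S₂) (w, u) →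
      ((0 : E), -ξ) ∈ convexNormal2 (gph T₁) (x, w) → ξ = 0) :
    (t, -us) ∈ convexNormal2 (gph (scomp S₂ T₁)) (x, u) ↔
      ∃ ws : P, (ws, -us) ∈ convexNormal2 (gph S₂) (w, u) ∧
        (t, -ws) ∈ convexNormal2 (gph T₁) (x, w) := by
  constructor
  · intro ht
    obtain ⟨ξ, α, hα, hne, hmult⟩ :=
      exists_multipliers_of_mem_convexNormal2_gph_scomp h₁ h₂ hxw hwu ht
    rcases hα.lt_or_eq with hα | rfl
    · have hscale : ∀ {I R : ℝ}, 0 ≤ I + α * R → R ≤ (-α)⁻¹ * I := fun h => by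
        rw [le_inv_mul_iff₀ (neg_pos.2 hα)]
        linarith
      refine ⟨(-α)⁻¹ • ξ, ⟨hwu, fun ⟨w₂, u'⟩ hS => ?_⟩, ⟨hxw, fun ⟨x', w₁⟩ hT => ?_⟩⟩
      · have := hscale (hmult x w w₂ u' hxw hS)
        simp only [sub_self, inner_zero_right, zero_sub, inner_sub_right, inner_neg_left,
          real_inner_smul_left, mul_sub] at this ⊢
        linarith
      · have := hscale (hmult x' w₁ w u hT hwu)
        simp only [sub_self, inner_zero_right, sub_zero, inner_sub_right, inner_neg_left,
          real_inner_smul_left, mul_sub] at this ⊢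
        linarith
    · have hξ : ξ ≠ 0 := hne.resolve_right (not_not.2 rfl)
      refine absurd (hq ξ ⟨hwu, fun ⟨w₂, u'⟩ hS => ?_⟩ ⟨hxw, fun ⟨x', w₁⟩ hT => ?_⟩) hξ
      · have := hmult x w w₂ u' hxw hS
        simp only [zero_mul, add_zero, inner_zero_left, inner_sub_right] at this ⊢
        linarith
      · have := hmult x' w₁ w u hT hwu
        simp only [zero_mul, add_zero, inner_zero_left, inner_neg_left,
          inner_sub_right] at this ⊢
        linarith
  · rintro ⟨ws, hws, hts⟩
    refine ⟨⟨w, hxw, hwu⟩, fun ⟨x', u'⟩ ⟨w', hT, hS⟩ => ?_⟩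
    have h₁' := hts.2 (x', w') hT
    have h₂' := hws.2 (w', u') hS
    simp only [inner_neg_left] at h₁' h₂' ⊢
    linarith

end Composition

theorem stmt16_general {n p m : ℕ} (S₁ : Euc n → Set (Euc p)) (S₂ : Euc p → Set (Euc m))
    (X : Set (Euc n)) (xb : Euc n) (ub : Euc m)
    (hcq : ∀ wb : Euc p, wb ∈ S₁ xb → ub ∈ S₂ wb →
      ∀ ws : Euc p, ws ∈ coderiv S₂ wb ub 0 →
        (0 : Euc n) ∈ projCoderiv S₁ X xb wb ws → ws = 0)
    (hcvx₁ : Convex ℝ (gph (restr S₁ X))) (hcvx₂ : Convex ℝ (gph S₂))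
    (hX : SmoothManifoldAround X xb) :
    Convex ℝ (gph (restr (scomp S₂ S₁) X)) ∧
    ∀ wb : Euc p, wb ∈ S₁ xb → xb ∈ X → ub ∈ S₂ wb →
      ∀ us : Euc m, projCoderiv (scomp S₂ S₁) X xb ub us =
        {ts : Euc n | ∃ ws ∈ coderiv S₂ wb ub us, ts ∈ projCoderiv S₁ X xb wb ws} := by
  obtain ⟨c, O, Φ, Φ', hchart⟩ := hX
  have hcvx : Convex ℝ (gph (restr (scomp S₂ S₁) X)) :=
    restr_scomp S₂ S₁ X ▸ hcvx₁.gph_scomp hcvx₂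
  refine ⟨hcvx, fun wb hwb hxb hub us => ?_⟩
  have hz₁ : (xb, wb) ∈ gph (restr S₁ X) := ⟨hwb, hxb⟩
  have hproj₁ := projCoderiv_eq_of_convex hcvx₁ hz₁ hchart.continuousAt
    hchart.eventually_tanCone_eq_ker
  have hcoderiv (u' : Euc m) :
      coderiv S₂ wb ub u' = {ws | (ws, -u') ∈ convexNormal2 (gph S₂) (wb, ub)} := by
    simp only [coderiv, lNormal2_eq_convexNormal2 hcvx₂]
  have hqual (ξ : Euc p) (h₂ : (ξ, (0 : Euc m)) ∈ convexNormal2 (gph S₂) (wb, ub))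
      (h₁ : ((0 : Euc n), -ξ) ∈ convexNormal2 (gph (restr S₁ X)) (xb, wb)) : ξ = 0 :=
    hcq wb hwb hub ξ (by simpa [hcoderiv] using h₂)
      (by rw [hproj₁]; exact ⟨zero_mem_tanCone hxb, h₁⟩)
  rw [projCoderiv_eq_of_convex hcvx ⟨⟨wb, hwb, hub⟩, hxb⟩ hchart.continuousAt
    hchart.eventually_tanCone_eq_ker, restr_scomp]
  ext ts
  simp only [mem_ofPred_eq, hcoderiv, hproj₁,
    mem_convexNormal2_gph_scomp_iff hcvx₁ hcvx₂ hz₁ hub hqual]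
  exact ⟨fun ⟨hts, ws, hws, hN⟩ => ⟨ws, hws, hts, hN⟩, fun ⟨ws, hws, hts, hN⟩ => ⟨hts, ws, hws, hN⟩⟩

/-- Chain rule equality: if additionally `S₁|_X` and `S₂` are
graph-convex and `X` is a smooth manifold around `xb`, then `(S₂∘S₁)|_X` is
graph-convex and
`D*_X (S₂∘S₁)(xb|ub) = D*_X S₁(xb|wb) ∘ D*S₂(wb|ub)` for every
`wb ∈ S₁|_X(xb) ∩ S₂⁻¹(ub)`. -/
theorem stmt16 {n p m : ℕ} (S₁ : Euc n → Set (Euc p)) (S₂ : Euc p → Set (Euc m))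
    (X : Set (Euc n)) (hXcl : IsClosed X)
    (h₁osc : OscRel S₁ X) (h₂osc : OscRel S₂ (univ : Set (Euc p)))
    (xb : Euc n) (ub : Euc m) (hmem : (xb, ub) ∈ gph (restr (scomp S₂ S₁) X))
    (hbdd : ∃ δ > 0, ∃ R : ℝ, ∀ x ∈ X, ∀ u : Euc m, ‖x - xb‖ < δ → ‖u - ub‖ < δ →
      ∀ w : Euc p, w ∈ S₁ x → u ∈ S₂ w → ‖w‖ ≤ R)
    (hcq : ∀ wb : Euc p, wb ∈ S₁ xb → ub ∈ S₂ wb →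
      ∀ ws : Euc p, ws ∈ coderiv S₂ wb ub 0 →
        (0 : Euc n) ∈ projCoderiv S₁ X xb wb ws → ws = 0)
    (hcvx₁ : Convex ℝ (gph (restr S₁ X))) (hcvx₂ : Convex ℝ (gph S₂))
    (hX : SmoothManifoldAround X xb) :
    Convex ℝ (gph (restr (scomp S₂ S₁) X)) ∧
    ∀ wb : Euc p, wb ∈ S₁ xb → xb ∈ X → ub ∈ S₂ wb →
      ∀ us : Euc m, projCoderiv (scomp S₂ S₁) X xb ub us =
        {ts : Euc n | ∃ ws ∈ coderiv S₂ wb ub us, ts ∈ projCoderiv S₁ X xb wb ws} :=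
  stmt16_general S₁ S₂ X xb ub hcq hcvx₁ hcvx₂ hX
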